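/- arXiv:1603.08111 — 3 statements merged into one kernel-verified Lean document; each statement's English description precedes it below -/
import Mathlib

section
/- Let f be the Gamma(N, λ) pdf with N ≥ 2. Then the expected water-filling power P(ν) = ∫_{1/ν}^{∞} (ν - 1/g) f(g) dg is a continuous, strictly increasing function of ν on (0, ∞), with P(ν) → 0 as ν → 0⁺ and P(ν) → ∞ as ν → ∞ (i.e., P is unbounded). -/
open Real MeasureTheory Set Filter

noncomputable def fpdf (N : ℕ) (l : ℝ) (g : ℝ) : ℝ :=
  l ^ N * g ^ (N - 1) * Real.exp (-l * g) / Real.Gamma N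

variable {N : ℕ} {l : ℝ}

lemma fpdf_int (hl : 0 < l) : IntegrableOn (fpdf N l) (Ioi 0) := by
  have h := integrableOn_rpow_mul_exp_neg_mul_rpow (s := ((N - 1 : ℕ) : ℝ)) (p := 1) (b := l)
    (lt_of_lt_of_le neg_one_lt_zero (Nat.cast_nonneg _)) one_pos hl
  have h2 : IntegrableOn (fun g : ℝ => g ^ (N-1) * Real.exp (-l * g)) (Ioi 0) :=
    IntegrableOn.congr_fun h (fun x hx => by rw [Real.rpow_one, Real.rpow_natCast]) measurableSet_Ioi
  refine IntegrableOn.congr_fun (h2.const_mul (l ^ N / Real.Gamma N)) (fun x hx => ?_) measurableSet_Ioi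
  unfold fpdf; ring

lemma Gamma_N_pos (hN : 2 ≤ N) : 0 < Real.Gamma N :=
  Real.Gamma_pos_of_pos (by exact_mod_cast Nat.lt_of_lt_of_le Nat.zero_lt_two hN)

lemma fpdf_pos (hN : 2 ≤ N) (hl : 0 < l) {g : ℝ} (hg : 0 < g) : 0 < fpdf N l g := by
  have hG := Gamma_N_pos hN
  unfold fpdf; positivity

lemma fpdf_nonneg (hN : 2 ≤ N) (hl : 0 < l) {g : ℝ} (hg : 0 < g) : 0 ≤ fpdf N l g :=
  (fpdf_pos hN hl hg).le

-- integrability of (ν - 1/g) * fpdf on Ioi a, a > 0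
lemma int_on (hN : 2 ≤ N) (hl : 0 < l) (ν : ℝ) {a : ℝ} (ha : 0 < a) :
    IntegrableOn (fun g => (ν - 1/g) * fpdf N l g) (Ioi a) := by
  have hf : IntegrableOn (fpdf N l) (Ioi a) :=
    (fpdf_int hl).mono_set (Ioi_subset_Ioi ha.le)
  refine Integrable.mono' (hf.const_mul (|ν| + 1/a)) ?_ ?_
  · refine (ContinuousOn.aestronglyMeasurable ?_ measurableSet_Ioi)
    apply ContinuousOn.mul
    · exact continuousOn_const.sub (continuousOn_const.div continuousOn_id
        (fun x hx => ne_of_gt (ha.trans hx)))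
    · unfold fpdf
      fun_prop
  · filter_upwards [self_mem_ae_restrict measurableSet_Ioi] with g hg
    have hg0 : 0 < g := ha.trans hg
    have h1 : |ν - 1/g| ≤ |ν| + 1/a := by
      refine (abs_sub _ _).trans ?_
      gcongr
      rw [abs_of_nonneg (by positivity)]
      exact one_div_le_one_div_of_le ha (le_of_lt hg)
    rw [norm_mul, Real.norm_eq_abs, Real.norm_eq_abs, abs_of_nonneg (fpdf_nonneg hN hl hg0)]
    exact mul_le_mul_of_nonneg_right h1 (fpdf_nonneg hN hl hg0)

lemma tail_pos (hN : 2 ≤ N) (hl : 0 < l) {a : ℝ} (ha : 0 < a) :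
    0 < ∫ g in Ioi a, fpdf N l g := by
  have hf : IntegrableOn (fpdf N l) (Ioi a) :=
    (fpdf_int hl).mono_set (Ioi_subset_Ioi ha.le)
  have hnn : 0 ≤ᵐ[volume.restrict (Ioi a)] (fpdf N l) := by
    filter_upwards [self_mem_ae_restrict measurableSet_Ioi] with g hg
    exact fpdf_nonneg hN hl (ha.trans hg)
  rw [setIntegral_pos_iff_support_of_nonneg_ae hnn hf]
  have hsub : Ioi a ⊆ Function.support (fpdf N l) ∩ Ioi a := fun x hx =>
    ⟨ne_of_gt (fpdf_pos hN hl (ha.trans hx)), hx⟩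
  calc (0:ENNReal) < volume (Ioi a) := by rw [Real.volume_Ioi]; exact ENNReal.zero_lt_top
    _ ≤ _ := measure_mono hsub

lemma P_mono (hN : 2 ≤ N) (hl : 0 < l) {ν₁ ν₂ : ℝ} (h1 : 0 < ν₁) (h12 : ν₁ < ν₂) :
    (∫ g in Ioi (1/ν₁), (ν₁ - 1/g) * fpdf N l g) < ∫ g in Ioi (1/ν₂), (ν₂ - 1/g) * fpdf N l g := by
  have h2 : 0 < ν₂ := h1.trans h12
  have ha1 : 0 < 1/ν₁ := by positivity
  have ha2 : 0 < 1/ν₂ := by positivity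
  have hff : IntegrableOn (fpdf N l) (Ioi (1/ν₁)) :=
    (fpdf_int hl).mono_set (Ioi_subset_Ioi ha1.le)
  have key : (∫ g in Ioi (1/ν₁), (ν₂ - 1/g) * fpdf N l g)
      = (∫ g in Ioi (1/ν₁), (ν₁ - 1/g) * fpdf N l g) + (ν₂ - ν₁) * ∫ g in Ioi (1/ν₁), fpdf N l g := by
    rw [← integral_const_mul, ← integral_add (int_on hN hl ν₁ ha1) (hff.const_mul _)]
    congr 1; ext g; ring
  have hpos : 0 < (ν₂ - ν₁) * ∫ g in Ioi (1/ν₁), fpdf N l g :=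
    mul_pos (by linarith) (tail_pos hN hl ha1)
  have step1 : (∫ g in Ioi (1/ν₁), (ν₁ - 1/g) * fpdf N l g)
      < ∫ g in Ioi (1/ν₁), (ν₂ - 1/g) * fpdf N l g := by rw [key]; linarith
  refine step1.trans_le (setIntegral_mono_set (int_on hN hl ν₂ ha2) ?_ ?_)
  · filter_upwards [self_mem_ae_restrict measurableSet_Ioi] with g hg
    have hg0 : 0 < g := ha2.trans hg
    have : 1/g < ν₂ := by
      rw [div_lt_iff₀ hg0]
      calc (1:ℝ) = ν₂ * (1/ν₂) := by field_simp
        _ < ν₂ * g := by exact mul_lt_mul_of_pos_left hg h2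
    exact mul_nonneg (by linarith) (fpdf_nonneg hN hl hg0)
  · exact HasSubset.Subset.eventuallyLE (Ioi_subset_Ioi (by
      exact one_div_le_one_div_of_le h1 h12.le))

lemma inv_lt_of_mem {ν g : ℝ} (hv : 0 < ν) (hg : g ∈ Ioi (1/ν)) : 1/g < ν := by
  have hg0 : 0 < g := lt_trans (by positivity) hg
  rw [div_lt_iff₀ hg0]
  calc (1:ℝ) = ν * (1/ν) := by field_simp
    _ < ν * g := mul_lt_mul_of_pos_left hg hv

lemma P_nonneg (hN : 2 ≤ N) (hl : 0 < l) {ν : ℝ} (hv : 0 < ν) :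
    0 ≤ ∫ g in Ioi (1/ν), (ν - 1/g) * fpdf N l g := by
  refine setIntegral_nonneg measurableSet_Ioi (fun g hg => ?_)
  have := inv_lt_of_mem hv hg
  exact mul_nonneg (by linarith) (fpdf_nonneg hN hl (lt_trans (by positivity) hg))

lemma P_le (hN : 2 ≤ N) (hl : 0 < l) {ν : ℝ} (hv : 0 < ν) :
    (∫ g in Ioi (1/ν), (ν - 1/g) * fpdf N l g) ≤ ν * ∫ g in Ioi 0, fpdf N l g := by
  have ha : (0:ℝ) < 1/ν := by positivity
  have hff : IntegrableOn (fpdf N l) (Ioi (1/ν)) :=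
    (fpdf_int hl).mono_set (Ioi_subset_Ioi ha.le)
  calc (∫ g in Ioi (1/ν), (ν - 1/g) * fpdf N l g)
      ≤ ∫ g in Ioi (1/ν), ν * fpdf N l g := by
        refine setIntegral_mono_on (int_on hN hl ν ha) (hff.const_mul ν) measurableSet_Ioi
          (fun g hg => ?_)
        have hg0 : 0 < g := lt_trans ha hg
        have : 0 < 1/g := by positivity
        exact mul_le_mul_of_nonneg_right (by linarith) (fpdf_nonneg hN hl hg0)
    _ = ν * ∫ g in Ioi (1/ν), fpdf N l g := integral_const_mul ν _
    _ ≤ ν * ∫ g in Ioi 0, fpdf N l g := by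
        refine mul_le_mul_of_nonneg_left ?_ hv.le
        refine setIntegral_mono_set (fpdf_int hl) ?_
          (HasSubset.Subset.eventuallyLE (Ioi_subset_Ioi ha.le))
        filter_upwards [self_mem_ae_restrict measurableSet_Ioi] with g hg
        exact fpdf_nonneg hN hl hg

lemma P_zero (hN : 2 ≤ N) (hl : 0 < l) :
    Tendsto (fun ν : ℝ => ∫ g in Ioi (1/ν), (ν - 1/g) * fpdf N l g)
      (nhdsWithin 0 (Ioi 0)) (nhds 0) := by
  have hC : Tendsto (fun ν : ℝ => ν * ∫ g in Ioi 0, fpdf N l g)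
      (nhdsWithin 0 (Ioi 0)) (nhds 0) := by
    have h : Tendsto (fun ν : ℝ => ν * ∫ g in Ioi 0, fpdf N l g) (nhds 0) (nhds (0 * ∫ g in Ioi 0, fpdf N l g)) :=
      (continuous_id.mul continuous_const).tendsto (0:ℝ)
    rw [zero_mul] at h
    exact h.mono_left nhdsWithin_le_nhds
  refine tendsto_of_tendsto_of_tendsto_of_le_of_le' tendsto_const_nhds hC ?_ ?_
  · filter_upwards [self_mem_nhdsWithin] with ν hv
    exact P_nonneg hN hl hv
  · filter_upwards [self_mem_nhdsWithin] with ν hv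
    exact P_le hN hl hv

lemma P_top (hN : 2 ≤ N) (hl : 0 < l) :
    Tendsto (fun ν : ℝ => ∫ g in Ioi (1/ν), (ν - 1/g) * fpdf N l g) atTop atTop := by
  set c := ∫ g in Ioi 1, fpdf N l g with hc
  have hcpos : 0 < c := tail_pos hN hl one_pos
  have hf1 : IntegrableOn (fpdf N l) (Ioi 1) :=
    (fpdf_int hl).mono_set (Ioi_subset_Ioi one_pos.le)
  have hlow : Tendsto (fun ν : ℝ => (ν - 1) * c) atTop atTop :=
    (tendsto_atTop_add_const_right _ (-1) tendsto_id).atTop_mul_const hcpos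
  refine tendsto_atTop_mono' _ ?_ hlow
  filter_upwards [eventually_ge_atTop (1:ℝ)] with ν hv
  have hv0 : (0:ℝ) < ν := lt_of_lt_of_le one_pos hv
  have ha : (0:ℝ) < 1/ν := by positivity
  have h1v : 1/ν ≤ 1 := by
    rw [div_le_one hv0]; exact hv
  calc (ν - 1) * c = ∫ g in Ioi 1, (ν - 1) * fpdf N l g := (integral_const_mul _ _).symm
    _ ≤ ∫ g in Ioi 1, (ν - 1/g) * fpdf N l g := by
        refine setIntegral_mono_on (hf1.const_mul _) (int_on hN hl ν one_pos)
          measurableSet_Ioi (fun g hg => ?_)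
        have hg1 : (1:ℝ) < g := hg
        have : 1/g ≤ 1 := by rw [div_le_one (lt_trans one_pos hg1)]; exact hg1.le
        exact mul_le_mul_of_nonneg_right (by linarith) (fpdf_nonneg hN hl (lt_trans one_pos hg1))
    _ ≤ ∫ g in Ioi (1/ν), (ν - 1/g) * fpdf N l g := by
        refine setIntegral_mono_set (int_on hN hl ν ha) ?_
          (HasSubset.Subset.eventuallyLE (Ioi_subset_Ioi h1v))
        filter_upwards [self_mem_ae_restrict measurableSet_Ioi] with g hg
        have := inv_lt_of_mem hv0 hg
        exact mul_nonneg (by linarith) (fpdf_nonneg hN hl (lt_trans ha hg))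

noncomputable def hmax (N : ℕ) (l : ℝ) (ν g : ℝ) : ℝ := max (ν - 1/g) 0 * fpdf N l g

lemma hmax_meas (ν : ℝ) : AEStronglyMeasurable (hmax N l ν) (volume.restrict (Ioi 0)) := by
  refine ContinuousOn.aestronglyMeasurable ?_ measurableSet_Ioi
  apply ContinuousOn.mul
  · exact (continuous_id.max continuous_const).comp_continuousOn
      (continuousOn_const.sub (continuousOn_const.div continuousOn_id
        (fun x hx => ne_of_gt hx)))
  · unfold fpdf; fun_prop

lemma hmax_norm_le (hN : 2 ≤ N) (hl : 0 < l) (ν : ℝ) {g : ℝ} (hg : 0 < g) :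
    ‖hmax N l ν g‖ ≤ |ν| * fpdf N l g := by
  have h1 : (0:ℝ) < 1/g := by positivity
  have h2 : max (ν - 1/g) 0 ≤ |ν| :=
    max_le (by have := le_abs_self ν; linarith) (abs_nonneg ν)
  rw [hmax, norm_mul, Real.norm_eq_abs, Real.norm_eq_abs,
    abs_of_nonneg (le_max_right _ _), abs_of_nonneg (fpdf_nonneg hN hl hg)]
  exact mul_le_mul_of_nonneg_right h2 (fpdf_nonneg hN hl hg)

lemma hmax_int (hN : 2 ≤ N) (hl : 0 < l) (ν : ℝ) :
    IntegrableOn (hmax N l ν) (Ioi 0) := by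
  refine Integrable.mono' (((fpdf_int (N:=N) hl)).const_mul (|ν|)) (hmax_meas ν) ?_
  filter_upwards [self_mem_ae_restrict measurableSet_Ioi] with g hg
  exact hmax_norm_le hN hl ν hg

lemma hrep (hN : 2 ≤ N) (hl : 0 < l) {ν : ℝ} (hv : 0 < ν) :
    (∫ g in Ioi (1/ν), (ν - 1/g) * fpdf N l g) = ∫ g in Ioi 0, hmax N l ν g := by
  have ha : (0:ℝ) < 1/ν := by positivity
  rw [setIntegral_eq_of_subset_of_forall_diff_eq_zero measurableSet_Ioi
    (Ioi_subset_Ioi ha.le) (fun g hg => ?_)]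
  · refine setIntegral_congr_fun measurableSet_Ioi (fun g hg => ?_)
    have := inv_lt_of_mem hv hg
    rw [hmax, max_eq_left (by linarith)]
  · obtain ⟨hg0, hg1⟩ := hg
    simp only [mem_Ioi, not_lt] at hg1
    have hg0' : (0:ℝ) < g := hg0
    have : ν ≤ 1/g := by
      rw [le_div_iff₀ hg0']
      calc ν * g ≤ ν * (1/ν) := mul_le_mul_of_nonneg_left hg1 hv.le
        _ = 1 := by field_simp
    rw [hmax, max_eq_right (by linarith), zero_mul]

lemma Q_cont (hN : 2 ≤ N) (hl : 0 < l) :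
    Continuous (fun ν : ℝ => ∫ g in Ioi 0, hmax N l ν g) := by
  rw [continuous_iff_continuousAt]
  intro ν₀
  refine continuousAt_of_dominated (Eventually.of_forall (fun ν => hmax_meas ν))
    ?_ (((fpdf_int (N:=N) hl)).const_mul (|ν₀| + 1)) ?_
  · filter_upwards [Metric.ball_mem_nhds ν₀ one_pos] with ν hν
    filter_upwards [self_mem_ae_restrict measurableSet_Ioi] with g hg
    refine (hmax_norm_le hN hl ν hg).trans ?_
    have : |ν| ≤ |ν₀| + 1 := by
      have := abs_sub_abs_le_abs_sub ν ν₀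
      have h2 : |ν - ν₀| < 1 := by simpa [Real.dist_eq] using hν
      linarith
    exact mul_le_mul_of_nonneg_right this (fpdf_nonneg hN hl hg)
  · filter_upwards [self_mem_ae_restrict measurableSet_Ioi] with g hg
    exact (((continuous_id.sub continuous_const).max continuous_const).mul
      continuous_const).continuousAt

lemma P_cont (hN : 2 ≤ N) (hl : 0 < l) :
    ContinuousOn (fun ν : ℝ => ∫ g in Ioi (1/ν), (ν - 1/g) * fpdf N l g) (Ioi 0) :=
  ((Q_cont hN hl).continuousOn).congr (fun ν hv => hrep hN hl hv)

/-- Expected water-filling power against a Gamma(N, λ) channel gain, `N ≥ 2`: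
`P(ν) = ∫_{1/ν}^∞ (ν - 1/g) f(g) dg` is continuous and strictly increasing on `(0,∞)`,
tends to `0` as `ν → 0⁺`, and is unbounded (tends to `∞`) as `ν → ∞`. -/
theorem stmt9 (N : ℕ) (hN : 2 ≤ N) (l : ℝ) (hl : 0 < l) :
    ContinuousOn (fun ν : ℝ => ∫ g in Set.Ioi (1 / ν),
        (ν - 1 / g) * (l ^ N * g ^ (N - 1) * Real.exp (-l * g) / Real.Gamma N))
      (Set.Ioi 0) ∧
    StrictMonoOn (fun ν : ℝ => ∫ g in Set.Ioi (1 / ν),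
        (ν - 1 / g) * (l ^ N * g ^ (N - 1) * Real.exp (-l * g) / Real.Gamma N))
      (Set.Ioi 0) ∧
    Tendsto (fun ν : ℝ => ∫ g in Set.Ioi (1 / ν),
        (ν - 1 / g) * (l ^ N * g ^ (N - 1) * Real.exp (-l * g) / Real.Gamma N))
      (nhdsWithin 0 (Set.Ioi 0)) (nhds 0) ∧
    Tendsto (fun ν : ℝ => ∫ g in Set.Ioi (1 / ν),
        (ν - 1 / g) * (l ^ N * g ^ (N - 1) * Real.exp (-l * g) / Real.Gamma N))
      atTop atTop := by
  refine ⟨P_cont hN hl, fun a ha b hb hab => P_mono hN hl ha hab, P_zero hN hl, P_top hN hl⟩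
end

section
/- Suppose ν(g_th) is implicitly defined by (ν - 1/g_th) + c - ν ln(ν g_th) = 0 with c > 0 and ν g_th > 1, and let R(g_th) = ∫_{g_th}^∞ ln(ν(g_th) g) f(g) dg with f a positive continuous pdf. Then R is strictly decreasing in g_th, because both ν(g_th) is decreasing (by the implicit function theorem) and raising g_th removes positive contributions ln(ν g) ≥ ln(ν g_th) > 0 from the integral. -/
/-!
Rearranged, the KKT equation reads `c = ν · k(ν a)` with
`k x = log x - 1 + 1/x`, which is positive and strictly increasing on `(1, ∞)`.
Hence if `a < b` and `ν(a) ≤ ν(b)`, then `ν(a) k(ν(a) a) < ν(b) k(ν(b) b)`, contradicting that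
both equal `c`: so `ν` is strictly decreasing. Consequently, for `a < b`, the integrand at `b`
is dominated on `(b, ∞)` by `log (ν(a) g) f g`, and passing from `(b, ∞)` to `(a, ∞)` adds the
integral over `(a, b]` of this function, which is positive there since `ν(a) g > ν(a) a > 1`.
-/

open Real MeasureTheory Set

lemma log_sub_one_add_inv_strictMonoOn :
    StrictMonoOn (fun x : ℝ => log x - 1 + x⁻¹) (Ici 1) := by
  intro x hx y hy hxy
  have hx0 : 0 < x := zero_lt_one.trans_le hx
  have hy0 : 0 < y := hx0.trans hxy
  have hlog : log (x / y) < x / y - 1 :=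
    log_lt_sub_one_of_pos (by positivity) (div_lt_one hy0 |>.mpr hxy).ne
  rw [log_div hx0.ne' hy0.ne'] at hlog
  have hinv : x⁻¹ - y⁻¹ ≤ 1 - x / y := by
    rw [inv_sub_inv hx0.ne' hy0.ne', one_sub_div hy0.ne', div_le_div_iff₀ (by positivity) hy0]
    nlinarith [mul_nonneg (mul_nonneg (sub_nonneg.2 hxy.le) (sub_nonneg.2 (mem_Ici.mp hx))) hy0.le]
  dsimp only
  linarith

lemma log_sub_one_add_inv_pos {x : ℝ} (hx : 1 < x) : 0 < log x - 1 + x⁻¹ := by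
  simpa using log_sub_one_add_inv_strictMonoOn self_mem_Ici hx.le hx

lemma eq_mul_log_sub_one_add_inv_of_kkt {ν a c : ℝ} (hνa : ν * a ≠ 0)
    (h : (ν - 1 / a) + c - ν * log (ν * a) = 0) :
    c = ν * (log (ν * a) - 1 + (ν * a)⁻¹) := by
  have hν : ν ≠ 0 := left_ne_zero_of_mul hνa
  have ha : a ≠ 0 := right_ne_zero_of_mul hνa
  field_simp at h ⊢
  linear_combination h

lemma strictAntiOn_of_kkt {c : ℝ} {ν : ℝ → ℝ} (hprod : ∀ a, 0 < a → 1 < ν a * a)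
    (hkkt : ∀ a, 0 < a → (ν a - 1 / a) + c - ν a * log (ν a * a) = 0) :
    StrictAntiOn ν (Ioi 0) := by
  have hc : ∀ a, 0 < a → c = ν a * (log (ν a * a) - 1 + (ν a * a)⁻¹) := fun a ha =>
    eq_mul_log_sub_one_add_inv_of_kkt (by linarith [hprod a ha]) (hkkt a ha)
  intro a ha b hb hab
  by_contra! hle
  have hνa : 0 < ν a := pos_of_mul_pos_left (one_pos.trans (hprod a ha)) (le_of_lt ha)
  have hprod_lt : ν a * a < ν b * b :=
    (mul_lt_mul_of_pos_left hab hνa).trans_le (mul_le_mul_of_nonneg_right hle (le_of_lt hb))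
  have hk : log (ν a * a) - 1 + (ν a * a)⁻¹ < log (ν b * b) - 1 + (ν b * b)⁻¹ :=
    log_sub_one_add_inv_strictMonoOn (hprod a ha).le
      (hprod a ha |>.trans hprod_lt).le hprod_lt
  have := mul_lt_mul' hle hk (log_sub_one_add_inv_pos (hprod a ha)).le (hνa.trans_le hle)
  linarith [hc a ha, hc b hb]

lemma setIntegral_Ioi_lt_of_pos_on_Ioc {φ : ℝ → ℝ} {a b : ℝ} (hab : a < b)
    (hφ : IntegrableOn φ (Ioi a)) (hpos : ∀ x ∈ Ioc a b, 0 < φ x) :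
    ∫ x in Ioi b, φ x < ∫ x in Ioi a, φ x := by
  have hslab : 0 < ∫ x in Ioc a b, φ x := by
    rw [← intervalIntegral.integral_of_le hab.le]
    refine intervalIntegral.intervalIntegral_pos_of_pos_on ?_ (fun x hx => hpos x
      (Ioo_subset_Ioc_self hx)) hab
    exact (intervalIntegrable_iff_integrableOn_Ioc_of_le hab.le).mpr
      (hφ.mono_set Ioc_subset_Ioi_self)
  rw [← Ioc_union_Ioi_eq_Ioi hab.le, setIntegral_union (Ioc_disjoint_Ioi le_rfl)
    measurableSet_Ioi (hφ.mono_set Ioc_subset_Ioi_self) (hφ.mono_set (Ioi_subset_Ioi hab.le))]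
  linarith

lemma setIntegral_log_mul_mono {f : ℝ → ℝ} {ν ν' b : ℝ} (hb : 0 ≤ b) (hν' : 0 < ν')
    (hνν' : ν' ≤ ν) (hf : ∀ x ∈ Ioi b, 0 ≤ f x)
    (hint' : IntegrableOn (fun g => log (ν' * g) * f g) (Ioi b))
    (hint : IntegrableOn (fun g => log (ν * g) * f g) (Ioi b)) :
    ∫ g in Ioi b, log (ν' * g) * f g ≤ ∫ g in Ioi b, log (ν * g) * f g := by
  refine setIntegral_mono_on hint' hint measurableSet_Ioi fun g hg => ?_
  have hg0 : 0 < g := hb.trans_lt hg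
  exact mul_le_mul_of_nonneg_right (log_le_log (by positivity) (by gcongr)) (hf g hg)

theorem stmt11_general (c : ℝ) (f : ℝ → ℝ) (νf : ℝ → ℝ)
    (hf_pos : ∀ x, 0 < f x)
    (hν_pos : ∀ a, 0 < a → 0 < νf a)
    (hν_prod : ∀ a, 0 < a → 1 < νf a * a)
    (hν_eq : ∀ a, 0 < a →
      (νf a - 1 / a) + c - νf a * Real.log (νf a * a) = 0)
    (hint : ∀ a, 0 < a → ∀ ν', 0 < ν' →
      IntegrableOn (fun g => Real.log (ν' * g) * f g) (Set.Ioi a)) :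
    StrictAntiOn (fun a : ℝ => ∫ g in Set.Ioi a, Real.log (νf a * g) * f g)
      (Set.Ioi 0) := by
  intro a ha b hb hab
  have hν_le : νf b ≤ νf a := (strictAntiOn_of_kkt hν_prod hν_eq ha hb hab).le
  calc ∫ g in Ioi b, log (νf b * g) * f g
      ≤ ∫ g in Ioi b, log (νf a * g) * f g :=
        setIntegral_log_mul_mono (le_of_lt hb) (hν_pos b hb) hν_le (fun x _ => (hf_pos x).le)
          (hint b hb _ (hν_pos b hb)) (hint b hb _ (hν_pos a ha))
    _ < ∫ g in Ioi a, log (νf a * g) * f g := by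
        refine setIntegral_Ioi_lt_of_pos_on_Ioc hab (hint a ha _ (hν_pos a ha)) fun g hg => ?_
        have : νf a * a < νf a * g := mul_lt_mul_of_pos_left hg.1 (hν_pos a ha)
        exact mul_pos (log_pos ((hν_prod a ha).trans this)) (hf_pos g)

/-- Correctness of the outer bisection: if `ν(g_th)` is implicitly defined by the KKT
equation `(ν - 1/g_th) + c - ν ln(ν g_th) = 0` with `c > 0` and `ν(g_th)·g_th > 1`,
and `f` is a positive continuous pdf (with the relevant integrability), then the
composed expected-rate map `g_th ↦ ∫_{g_th}^∞ ln(ν(g_th) g) f(g) dg` is strictly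
decreasing on `(0,∞)`. -/
theorem stmt11 (c : ℝ) (hc : 0 < c) (f : ℝ → ℝ) (νf : ℝ → ℝ)
    (hf_cont : Continuous f) (hf_pos : ∀ x, 0 < f x)
    (hf_pdf : ∫ x, f x = 1)
    (hν_pos : ∀ a, 0 < a → 0 < νf a)
    (hν_prod : ∀ a, 0 < a → 1 < νf a * a)
    (hν_eq : ∀ a, 0 < a →
      (νf a - 1 / a) + c - νf a * Real.log (νf a * a) = 0)
    (hint : ∀ a, 0 < a → ∀ ν', 0 < ν' →
      IntegrableOn (fun g => Real.log (ν' * g) * f g) (Set.Ioi a)) :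
    StrictAntiOn (fun a : ℝ => ∫ g in Set.Ioi a, Real.log (νf a * g) * f g)
      (Set.Ioi 0) :=
  stmt11_general c f νf hf_pos hν_pos hν_prod hν_eq hint
end

section
/- For fixed positive gains g_t, total rate requirement R, and per-active-slot fixed cost c > 0, the optimal value of min Σ_t [p_t + c·1{p_t>0}] subject to Σ_t ln(1+g_t p_t) = R, p_t ≥ 0, is attained by a policy that activates exactly the slots with the largest gains: if a slot with gain g is active and another with gain g' > g is inactive, swapping activation (and re-optimizing powers by water-filling on the active set) does not increase the cost. -/
open Real Finset

/-- Exchange property for energy minimization with per-active-slot circuit cost `c`: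
with `E S` the minimal total cost (sum of powers plus `c` per active slot) of meeting
the rate target `R` using only slots in `S`, replacing an active slot `t` by an
inactive slot `t'` of strictly larger gain does not increase the optimal cost; hence
an optimal policy activates the slots with the largest gains. -/
theorem stmt19 (T : ℕ) (g : Fin T → ℝ) (hg : ∀ t, 0 < g t) (R c : ℝ)
    (hR : 0 < R) (hc : 0 < c)
    (E : Finset (Fin T) → ℝ)
    (hE : E = fun S => sInf {e : ℝ | ∃ p : Fin T → ℝ,
      (∀ t, 0 ≤ p t) ∧ (∀ t ∉ S, p t = 0) ∧
      (∑ t, Real.log (1 + g t * p t)) = R ∧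
      e = (∑ t, p t) + c * S.card})
    (S : Finset (Fin T)) (t t' : Fin T)
    (ht : t ∈ S) (ht' : t' ∉ S) (hgain : g t < g t') :
    E (insert t' (S.erase t)) ≤ E S := by
  subst hE
  set S' : Finset (Fin T) := insert t' (S.erase t) with hS'
  have hne : t' ≠ t := by rintro rfl; exact ht' ht
  have ht'e : t' ∉ S.erase t := fun h => ht' (Finset.mem_of_mem_erase h)
  have hcard : S'.card = S.card := by
    have h1 : 0 < S.card := Finset.card_pos.2 ⟨t, ht⟩
    rw [hS', Finset.card_insert_of_notMem ht'e, Finset.card_erase_of_mem ht]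
    omega
  have split : ∀ f : Fin T → ℝ,
      ∑ s, f s = f t + (f t' + ∑ s ∈ (Finset.univ.erase t).erase t', f s) := by
    intro f
    rw [Finset.add_sum_erase _ f (Finset.mem_erase.2 ⟨hne, Finset.mem_univ t'⟩),
      Finset.add_sum_erase _ f (Finset.mem_univ t)]
  -- the feasible set for S is nonempty
  have hAne : Set.Nonempty {e : ℝ | ∃ p : Fin T → ℝ,
      (∀ s, 0 ≤ p s) ∧ (∀ s ∉ S, p s = 0) ∧
      (∑ s, Real.log (1 + g s * p s)) = R ∧
      e = (∑ s, p s) + c * S.card} := by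
    refine ⟨(Real.exp R - 1) / g t + c * S.card,
      fun s => if s = t then (Real.exp R - 1) / g t else 0, ?_, ?_, ?_, ?_⟩
    · intro s
      by_cases h : s = t <;> simp [h]
      exact div_nonneg (by linarith [Real.one_le_exp hR.le]) (hg t).le
    · intro s hs
      have : s ≠ t := fun h => hs (h ▸ ht)
      simp [this]
    · rw [Fintype.sum_eq_single t (fun s hs => by simp [hs])]
      simp only [eq_self_iff_true, if_true]
      rw [mul_div_cancel₀ _ (hg t).ne']
      rw [show (1 : ℝ) + (Real.exp R - 1) = Real.exp R by ring, Real.log_exp]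
    · rw [Fintype.sum_eq_single t (fun s hs => by simp [hs])]
      simp
  -- the feasible set for S' is bounded below by 0
  have hbdd : BddBelow {e : ℝ | ∃ p : Fin T → ℝ,
      (∀ s, 0 ≤ p s) ∧ (∀ s ∉ S', p s = 0) ∧
      (∑ s, Real.log (1 + g s * p s)) = R ∧
      e = (∑ s, p s) + c * S'.card} := by
    refine ⟨0, fun e he => ?_⟩
    obtain ⟨p, hp0, _, _, he⟩ := he
    have h1 : 0 ≤ ∑ s, p s := Finset.sum_nonneg fun s _ => hp0 s
    have h2 : (0:ℝ) ≤ c * S'.card := by positivity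
    rw [he]; linarith
  simp only
  refine le_csInf hAne fun e he => ?_
  obtain ⟨p, hp0, hpsupp, hrate, he⟩ := he
  set q : Fin T → ℝ := fun s =>
    if s = t then 0 else if s = t' then g t * p t / g t' else p s with hq
  have hqt : q t = 0 := by simp [hq]
  have hqt' : q t' = g t * p t / g t' := by simp [hq, hne]
  have hqo : ∀ s, s ≠ t → s ≠ t' → q s = p s := by
    intro s h1 h2; simp [hq, h1, h2]
  have hpt' : p t' = 0 := hpsupp t' ht'
  have hq0 : ∀ s, 0 ≤ q s := by
    intro s
    by_cases h1 : s = t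
    · simp [h1, hqt]
    by_cases h2 : s = t'
    · rw [h2, hqt']
      exact div_nonneg (mul_nonneg (hg t).le (hp0 t)) (hg t').le
    · rw [hqo s h1 h2]; exact hp0 s
  have hqsupp : ∀ s ∉ S', q s = 0 := by
    intro s hs
    have h2 : s ≠ t' := fun h => hs (h ▸ Finset.mem_insert_self t' _)
    by_cases h1 : s = t
    · simp [h1, hqt]
    · rw [hqo s h1 h2]
      refine hpsupp s fun hsS => hs ?_
      exact Finset.mem_insert_of_mem (Finset.mem_erase.2 ⟨h1, hsS⟩)
  have hcancel : g t' * (g t * p t / g t') = g t * p t :=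
    mul_div_cancel₀ _ (hg t').ne'
  have hrestlog : ∑ s ∈ (Finset.univ.erase t).erase t', Real.log (1 + g s * q s)
      = ∑ s ∈ (Finset.univ.erase t).erase t', Real.log (1 + g s * p s) :=
    Finset.sum_congr rfl fun s hs => by
      obtain ⟨h2, h1⟩ := Finset.mem_erase.1 hs
      rw [hqo s (Finset.mem_erase.1 h1).1 h2]
  have hrestsum : ∑ s ∈ (Finset.univ.erase t).erase t', q s
      = ∑ s ∈ (Finset.univ.erase t).erase t', p s :=
    Finset.sum_congr rfl fun s hs => by
      obtain ⟨h2, h1⟩ := Finset.mem_erase.1 hs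
      rw [hqo s (Finset.mem_erase.1 h1).1 h2]
  have hqrate : (∑ s, Real.log (1 + g s * q s)) = R := by
    rw [split (fun s => Real.log (1 + g s * p s)), hpt', mul_zero, add_zero,
      Real.log_one] at hrate
    rw [split, hqt, hqt', hcancel, hrestlog, mul_zero, add_zero, Real.log_one]
    linarith
  have hqsum : (∑ s, q s) ≤ ∑ s, p s := by
    rw [split q, split p, hqt, hqt', hpt', hrestsum]
    have hle : g t * p t / g t' ≤ p t := by
      rw [div_le_iff₀ (hg t')]
      calc g t * p t ≤ g t' * p t :=
            mul_le_mul_of_nonneg_right hgain.le (hp0 t)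
        _ = p t * g t' := mul_comm _ _
    linarith
  have hmem : (∑ s, q s) + c * S'.card ∈ {e : ℝ | ∃ p : Fin T → ℝ,
      (∀ s, 0 ≤ p s) ∧ (∀ s ∉ S', p s = 0) ∧
      (∑ s, Real.log (1 + g s * p s)) = R ∧
      e = (∑ s, p s) + c * S'.card} := ⟨q, hq0, hqsupp, hqrate, rfl⟩
  calc sInf {e : ℝ | ∃ p : Fin T → ℝ,
      (∀ s, 0 ≤ p s) ∧ (∀ s ∉ S', p s = 0) ∧
      (∑ s, Real.log (1 + g s * p s)) = R ∧
      e = (∑ s, p s) + c * S'.card} ≤ (∑ s, q s) + c * S'.card :=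
        csInf_le hbdd hmem
    _ ≤ e := by rw [he, hcard]; linarith
end
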